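/- arXiv:1706.01530 — 2 statements merged into one kernel-verified Lean document; each statement's English description precedes it below -/
import Mathlib

section
/- Let λ₁ ∈ (0, 1/2] and let χ : ℝ → [0,1] be a smooth function supported in [0, 2λ₁] with bounded derivatives of all orders. Let ω₁, ω₂ : (0, ∞) → ℂ be smooth functions with ω_i(z) = 0 for z ≤ 1/2 and satisfying |ω_i^{(j)}(z)| ≤ z^{−1/2−j} for j = 0, 1, 2, 3 and all z > 0 (i = 1, 2). Then there exists a constant C (depending on χ) such that for all r, s ≥ 1: |∫₀^∞ e^{iλ(r−s)} ω₁(λr) ω₂(λs) λ χ(λ) dλ| ≤ C · s · (1 + log r) / ( r · ⟨r + s⟩ · ⟨r − s⟩ ). -/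
/-!
Up to normalisation the integral is the Fourier transform, at frequency `r - s`, of the amplitude
`F(λ) = ω₁(λr) ω₂(λs) λ χ(λ)`. It is supported in `[1/(2 min(r,s)), 1]`, and since each factor
obeys symbol-type bounds, the Leibniz rule gives `|F⁽ⁿ⁾(λ)| ≲ (rs)^(-1/2) λ^(-n)` for `n ≤ 3`.
Integrating by parts `n` times, `|r - s|ⁿ |I| ≲ (rs)^(-1/2) ∫ λ^(-n) dλ` over that interval.
Take `n = 0` when `|r - s| ≤ 1`, `n = 1` when `r ≤ 2s` (the integral of `λ⁻¹` is the logarithm),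
and `n = 3` when `r > 2s`, where `∫ λ^(-3) ≲ s²` because the support starts at `1/(2s)`.
-/

open MeasureTheory Real Set Filter

open scoped FourierTransform

theorem contDiff_of_contDiffOn_Ioi_of_eq_zero {E : Type*} [NormedAddCommGroup E]
    [NormedSpace ℝ E] {f : ℝ → E} {n : WithTop ℕ∞} {a b : ℝ} (hab : a < b)
    (hf : ContDiffOn ℝ n f (Ioi a)) (hzero : ∀ z ≤ b, f z = 0) : ContDiff ℝ n f := by
  refine contDiff_iff_contDiffAt.mpr fun x => ?_
  rcases lt_or_ge a x with hx | hx
  · exact hf.contDiffAt (Ioi_mem_nhds hx)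
  · have : f =ᶠ[nhds x] fun _ => 0 :=
      eventually_of_mem (Iio_mem_nhds (hx.trans_lt hab)) fun z hz => hzero z hz.le
    exact contDiffAt_const.congr_of_eventuallyEq this

theorem support_iteratedDeriv_subset_tsupport {E : Type*} [NormedAddCommGroup E]
    [NormedSpace ℝ E] {f : ℝ → E} (n : ℕ) : Function.support (iteratedDeriv n f) ⊆ tsupport f := by
  intro x hx
  refine support_iteratedFDeriv_subset (𝕜 := ℝ) n ?_
  contrapose! hx
  simp [iteratedDeriv_eq_iteratedFDeriv, Function.notMem_support.mp hx]

theorem exists_forall_le_forall_abs_le {f : ℕ → ℝ → ℝ} (hf : ∀ n, ∃ B, ∀ t, |f n t| ≤ B)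
    (N : ℕ) : ∃ B, ∀ n ≤ N, ∀ t, |f n t| ≤ B := by
  induction N with
  | zero => simpa using hf 0
  | succ N ih =>
    obtain ⟨B, hB⟩ := ih
    obtain ⟨B', hB'⟩ := hf (N + 1)
    refine ⟨max B B', fun n hn t => ?_⟩
    rcases Nat.le_succ_iff.mp hn with hn | rfl
    · exact (hB n hn t).trans (le_max_left _ _)
    · exact (hB' t).trans (le_max_right _ _)

theorem integral_norm_le_intervalIntegral_of_support_subset {E : Type*} [NormedAddCommGroup E]
    {g : ℝ → E} {φ : ℝ → ℝ} {a b : ℝ} (hab : a ≤ b) (hg : Function.support g ⊆ Icc a b)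
    (hφ : ContinuousOn φ (Icc a b)) (hgφ : ∀ l ∈ Icc a b, ‖g l‖ ≤ φ l) (hgi : Integrable g) :
    ∫ l, ‖g l‖ ≤ ∫ l in a..b, φ l := by
  have hzero : ∀ l ∉ Icc a b, ‖g l‖ = 0 := fun l hl => by
    rw [norm_eq_zero]; exact Function.notMem_support.mp fun h => hl (hg h)
  rw [← setIntegral_eq_integral_of_forall_compl_eq_zero hzero,
    intervalIntegral.integral_of_le hab, ← integral_Icc_eq_integral_Ioc]
  exact setIntegral_mono_on hgi.norm.integrableOn hφ.integrableOn_Icc measurableSet_Icc hgφ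

theorem pow_abs_mul_norm_integral_exp_mul_le {F : ℝ → ℂ} {n : ℕ} (hF : ContDiff ℝ n F)
    (hsupp : HasCompactSupport F) (t : ℝ) :
    |t| ^ n * ‖∫ l, Complex.exp (Complex.I * ↑(l * t)) * F l‖ ≤ ∫ l, ‖iteratedDeriv n F l‖ := by
  have hint (k : ℕ) (hk : k ≤ n) : Integrable (iteratedDeriv k F) :=
    (hF.continuous_iteratedDeriv k (by exact_mod_cast hk)).integrable_of_hasCompactSupport
      (hsupp.mono' (support_iteratedDeriv_subset_tsupport k))
  set w := -t / (2 * π)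
  have hfourier (G : ℝ → ℂ) : 𝓕 G w = ∫ l, Complex.exp (Complex.I * ↑(l * t)) * G l := by
    rw [Real.fourier_real_eq_integral_exp_smul]
    congr 1 with l
    rw [smul_eq_mul]
    congr 2
    simp only [w]; push_cast; field_simp
  have hderiv := congrFun
    (Real.fourier_iteratedDeriv hF (fun k hk => hint k (by exact_mod_cast hk)) le_rfl) w
  have hnorm : ‖(2 * π * Complex.I * w) ^ n‖ = |t| ^ n := by
    rw [norm_pow]
    congr 1
    simp only [w, norm_mul, Complex.norm_ofNat, Complex.norm_real, Complex.norm_I, norm_div,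
      Real.norm_eq_abs, abs_neg, abs_two, abs_of_pos pi_pos]
    field_simp
  calc |t| ^ n * ‖∫ l, Complex.exp (Complex.I * ↑(l * t)) * F l‖
      = ‖𝓕 (iteratedDeriv n F) w‖ := by rw [hderiv, norm_smul, hnorm, hfourier]
    _ ≤ ∫ l, ‖iteratedDeriv n F l‖ := by
      rw [hfourier]
      refine (norm_integral_le_integral_norm _).trans_eq ?_
      congr 1 with l
      rw [norm_mul, Complex.norm_exp_I_mul_ofReal, one_mul]

def HasSymbolBoundAt {E : Type*} [NormedAddCommGroup E] [NormedSpace ℝ E]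
    (f : ℝ → E) (N : ℕ) (C α l : ℝ) : Prop :=
  ∀ i ≤ N, ‖iteratedDeriv i f l‖ ≤ C * l ^ (α - i)

namespace HasSymbolBoundAt

variable {E : Type*} [NormedAddCommGroup E] [NormedSpace ℝ E] {N : ℕ} {C α l : ℝ}

theorem const_nonneg {f : ℝ → E} (hf : HasSymbolBoundAt f N C α l) (hl : 0 < l) : 0 ≤ C :=
  nonneg_of_mul_nonneg_left ((norm_nonneg _).trans (hf 0 (Nat.zero_le N))) (rpow_pos_of_pos hl _)

theorem mul {A : Type*} [NormedRing A] [NormedAlgebra ℝ A] {f g : ℝ → A} {C' β : ℝ}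
    (hf : HasSymbolBoundAt f N C α l) (hg : HasSymbolBoundAt g N C' β l)
    (hfs : ContDiff ℝ N f) (hgs : ContDiff ℝ N g) (hl : 0 < l) :
    HasSymbolBoundAt (fun x => f x * g x) N (2 ^ N * C * C') (α + β) l := by
  intro n hn
  have hC := hf.const_nonneg hl
  have hC' := hg.const_nonneg hl
  have hterm (i : ℕ) (hi : i ∈ Finset.range (n + 1)) :
      (n.choose i : ℝ) * ‖iteratedDeriv i f l‖ * ‖iteratedDeriv (n - i) g l‖ ≤
        (n.choose i : ℝ) * (C * C' * l ^ (α + β - n)) := by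
    have hin : i ≤ n := Nat.lt_succ_iff.mp (Finset.mem_range.mp hi)
    have hexp : l ^ (α - i) * l ^ (β - ↑(n - i)) = l ^ (α + β - n) := by
      rw [← rpow_add hl, Nat.cast_sub hin]; ring_nf
    have hfi := hf i (hin.trans hn)
    calc (n.choose i : ℝ) * ‖iteratedDeriv i f l‖ * ‖iteratedDeriv (n - i) g l‖
        ≤ (n.choose i : ℝ) * (C * l ^ (α - i)) * (C' * l ^ (β - ↑(n - i))) :=
          mul_le_mul (mul_le_mul_of_nonneg_left hfi (Nat.cast_nonneg _))
            (hg (n - i) ((Nat.sub_le n i).trans hn)) (norm_nonneg _)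
            (mul_nonneg (Nat.cast_nonneg _) ((norm_nonneg _).trans hfi))
      _ = (n.choose i : ℝ) * (C * C' * l ^ (α + β - n)) := by rw [← hexp]; ring
  have hleibniz := norm_iteratedFDeriv_mul_le hfs hgs l (n := n) (by exact_mod_cast hn)
  simp only [norm_iteratedFDeriv_eq_norm_iteratedDeriv] at hleibniz
  calc ‖iteratedDeriv n (fun x => f x * g x) l‖
      ≤ ∑ i ∈ Finset.range (n + 1), (n.choose i : ℝ) * (C * C' * l ^ (α + β - n)) :=
        hleibniz.trans (Finset.sum_le_sum hterm)
    _ = 2 ^ n * (C * C' * l ^ (α + β - n)) := by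
        rw [← Finset.sum_mul, ← Nat.cast_sum, Nat.sum_range_choose, Nat.cast_pow, Nat.cast_ofNat]
    _ ≤ 2 ^ N * (C * C' * l ^ (α + β - n)) := by gcongr; norm_num
    _ = 2 ^ N * C * C' * l ^ (α + β - n) := by ring

theorem comp_mul_const {f : ℝ → E} {r : ℝ} (hf : HasSymbolBoundAt f N C α (l * r))
    (hfs : ContDiff ℝ N f) (hl : 0 < l) (hr : 0 < r) :
    HasSymbolBoundAt (fun x => f (x * r)) N (C * r ^ α) α l := by
  intro i hi
  have hcomp : (fun x => f (x * r)) = fun x => f (r * x) := by simp only [mul_comm]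
  rw [hcomp, iteratedDeriv_comp_const_smul (hfs.of_le (by exact_mod_cast hi)), norm_smul,
    norm_pow, Real.norm_of_nonneg hr.le]
  calc r ^ i * ‖iteratedDeriv i f (r * l)‖ ≤ r ^ i * (C * (l * r) ^ (α - i)) := by
        rw [mul_comm r l]; gcongr; exact hf i hi
    _ = C * r ^ α * l ^ (α - i) := by
        rw [mul_rpow hl.le hr.le, ← rpow_natCast, rpow_sub hr]
        field_simp

theorem ofReal {f : ℝ → ℝ} (hf : HasSymbolBoundAt f N C α l) (hfs : ContDiff ℝ N f) :
    HasSymbolBoundAt (fun x => (f x : ℂ)) N C α l := by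
  intro i hi
  have hcomp : (fun x => (f x : ℂ)) = Complex.ofRealLI ∘ f := rfl
  rw [hcomp, ← norm_iteratedFDeriv_eq_norm_iteratedDeriv,
    Complex.ofRealLI.norm_iteratedFDeriv_comp_left hfs.contDiffAt (by exact_mod_cast hi),
    norm_iteratedFDeriv_eq_norm_iteratedDeriv]
  exact hf i hi

end HasSymbolBoundAt

theorem hasSymbolBoundAt_id (N : ℕ) {l : ℝ} (hl : 0 < l) :
    HasSymbolBoundAt (fun x : ℝ => x) N 1 1 l := by
  intro i _
  rw [iteratedDeriv_fun_id]
  rcases i with _ | _ | i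
  · simp [abs_of_pos hl]
  · simp
  · simp only [Nat.add_eq_zero_iff, one_ne_zero, and_false, ↓reduceIte, Nat.add_eq_right,
      norm_zero, one_mul]
    positivity

theorem hasSymbolBoundAt_of_forall_norm_le {E : Type*} [NormedAddCommGroup E] [NormedSpace ℝ E]
    {f : ℝ → E} {N : ℕ} {B l : ℝ} (hB : ∀ i ≤ N, ∀ x, ‖iteratedDeriv i f x‖ ≤ B)
    (hl : 0 < l) (hl1 : l ≤ 1) : HasSymbolBoundAt f N B 0 l := by
  intro i hi
  have hB0 : 0 ≤ B := (norm_nonneg _).trans (hB 0 (Nat.zero_le N) 0)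
  refine (hB i hi l).trans (le_mul_of_one_le_right hB0 ?_)
  rw [zero_sub]
  exact one_le_rpow_of_pos_of_le_one_of_nonpos hl hl1 (by simp)

theorem pow_abs_mul_norm_integral_le_of_hasSymbolBoundAt {F : ℝ → ℂ} {N n : ℕ} {a b K α : ℝ}
    (hn : n ≤ N) (ha : 0 < a) (hab : a ≤ b) (hF : ContDiff ℝ N F)
    (hsupp : Function.support F ⊆ Icc a b) (hbound : ∀ l ∈ Icc a b, HasSymbolBoundAt F N K α l)
    (t : ℝ) :
    |t| ^ n * ‖∫ l, Complex.exp (Complex.I * ↑(l * t)) * F l‖ ≤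
      K * ∫ l in a..b, l ^ (α - n) := by
  have hcompact : HasCompactSupport F :=
    HasCompactSupport.of_support_subset_isCompact isCompact_Icc hsupp
  have hFn : ContDiff ℝ n F := hF.of_le (by exact_mod_cast hn)
  rw [← intervalIntegral.integral_const_mul]
  refine (pow_abs_mul_norm_integral_exp_mul_le hFn hcompact t).trans ?_
  refine integral_norm_le_intervalIntegral_of_support_subset hab
    ((support_iteratedDeriv_subset_tsupport n).trans (closure_minimal hsupp isClosed_Icc)) ?_
    (fun l hl => hbound l hl n hn) ?_
  · exact continuousOn_const.mul fun l hl =>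
      (continuousAt_rpow_const l _ (Or.inl (ha.trans_le hl.1).ne')).continuousWithinAt
  · exact (hFn.continuous_iteratedDeriv n le_rfl).integrable_of_hasCompactSupport
      (hcompact.mono' (support_iteratedDeriv_subset_tsupport n))

theorem intervalIntegral_rpow_neg_one {a : ℝ} (ha : 0 < a) :
    ∫ l in a..1, l ^ (-(1 : ℝ)) = Real.log (1 / a) := by
  rw [← integral_inv (notMem_uIcc_of_lt ha one_pos)]
  exact intervalIntegral.integral_congr fun l _ => rpow_neg_one l

theorem intervalIntegral_rpow_neg_three_le {a : ℝ} (ha : 0 < a) :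
    ∫ l in a..1, l ^ (-(3 : ℝ)) ≤ a ^ (-(2 : ℝ)) / 2 := by
  rw [integral_rpow (Or.inr ⟨by norm_num, notMem_uIcc_of_lt ha one_pos⟩)]
  norm_num
  linarith

theorem sqrt_one_add_sq_le (x : ℝ) : √(1 + x ^ 2) ≤ 1 + |x| := by
  rw [sqrt_le_left (by positivity), ← sq_abs x]
  nlinarith [abs_nonneg x]

theorem mul_le_of_decay_bounds {r s L K N u : ℝ} (hr : 1 ≤ r) (hs : 1 ≤ s) (hL : 1 ≤ L)
    (hN : 0 ≤ N) (hu : u ^ 2 = r * s) (hu0 : 0 ≤ u) (h0 : N * u ≤ K)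
    (h1 : |r - s| * N * u ≤ K * L) (h3 : |r - s| ^ 3 * N * u ≤ K * (2 * s ^ 2)) :
    N * (r * (1 + r + s) * (1 + |r - s|)) ≤ 48 * K * s * L := by
  have hKs : 0 ≤ K * s := mul_nonneg ((mul_nonneg hN hu0).trans h0) (by linarith)
  have hKsL : K * s ≤ K * s * L := le_mul_of_one_le_right hKs hL
  rcases le_or_gt r (2 * s) with hrs | hrs
  · have hr2 : r ≤ 2 * u := by nlinarith
    have hrs' : 1 + r + s ≤ 4 * s := by linarith
    rcases le_or_gt |r - s| 1 with hnear | hfar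
    · calc N * (r * (1 + r + s) * (1 + |r - s|)) ≤ N * (2 * u * (4 * s) * 2) := by
            gcongr; linarith
        _ = 16 * (N * u) * s := by ring
        _ ≤ 16 * K * s := by gcongr
        _ ≤ 48 * K * s * L := by linarith
    · calc N * (r * (1 + r + s) * (1 + |r - s|)) ≤ N * (2 * u * (4 * s) * (2 * |r - s|)) := by
            gcongr; linarith
        _ = 16 * (|r - s| * N * u) * s := by ring
        _ ≤ 16 * (K * L) * s := by gcongr
        _ ≤ 48 * K * s * L := by linarith
  · set d := r - s
    have hd : |d| = d := abs_of_pos (by linarith)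
    have hsu : s ≤ u := by nlinarith
    have hd3 : d ^ 3 * N * s ≤ K * (2 * s ^ 2) := by
      rw [← hd]; exact (mul_le_mul_of_nonneg_left hsu (by positivity)).trans h3
    have hd3' : d ^ 3 * N ≤ 2 * K * s := by nlinarith
    calc N * (r * (1 + r + s) * (1 + |d|)) ≤ N * (r * (3 * r) * (2 * d)) := by
          gcongr <;> linarith
      _ ≤ N * (2 * d * (3 * (2 * d)) * (2 * d)) := by gcongr <;> linarith
      _ = 24 * (d ^ 3 * N) := by ring
      _ ≤ 24 * (2 * K * s) := by gcongr
      _ ≤ 48 * K * s * L := by linarith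

theorem le_div_of_decay_bounds {r s L K N : ℝ} (hr : 1 ≤ r) (hs : 1 ≤ s) (hL : 1 ≤ L)
    (hN : 0 ≤ N) (h0 : N ≤ K / √(r * s)) (h1 : |r - s| * N ≤ K / √(r * s) * L)
    (h3 : |r - s| ^ 3 * N ≤ K / √(r * s) * (2 * s ^ 2)) :
    N ≤ 48 * K * s * L / (r * √(1 + (r + s) ^ 2) * √(1 + (r - s) ^ 2)) := by
  have hu0 : 0 < √(r * s) := sqrt_pos.mpr (by positivity)
  rw [le_div_iff₀ hu0] at h0
  rw [div_mul_eq_mul_div, le_div_iff₀ hu0] at h1 h3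
  have hbracket : r * √(1 + (r + s) ^ 2) * √(1 + (r - s) ^ 2) ≤
      r * (1 + r + s) * (1 + |r - s|) := by
    have := sqrt_one_add_sq_le (r + s)
    rw [abs_of_pos (by linarith)] at this
    gcongr
    · linarith
    · exact sqrt_one_add_sq_le _
  rw [le_div_iff₀ (by positivity)]
  exact (mul_le_mul_of_nonneg_left hbracket hN).trans
    (mul_le_of_decay_bounds hr hs hL hN (sq_sqrt (by positivity)) hu0.le h0 h1 h3)

theorem support_amplitude_subset {ω₁ ω₂ : ℝ → ℂ} {χ : ℝ → ℝ} {r s : ℝ} (hr : 0 < r)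
    (hs : 0 < s) (hω₁ : ∀ z ≤ 1 / 2, ω₁ z = 0) (hω₂ : ∀ z ≤ 1 / 2, ω₂ z = 0)
    (hχ : ∀ t, 1 < t → χ t = 0) :
    Function.support (fun l : ℝ => ω₁ (l * r) * (ω₂ (l * s) * ((l * χ l : ℝ) : ℂ))) ⊆
      Icc (1 / (2 * min r s)) 1 := by
  intro l hl
  simp only [Function.mem_support, ne_eq, mul_eq_zero, Complex.ofReal_eq_zero, not_or] at hl
  obtain ⟨h₁, h₂, -, hχl⟩ := hl
  have hlr : 1 / 2 < l * r := lt_of_not_ge (mt (hω₁ _) h₁)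
  have hls : 1 / 2 < l * s := lt_of_not_ge (mt (hω₂ _) h₂)
  have hl0 : 0 < l := by nlinarith
  refine ⟨?_, le_of_not_gt (mt (hχ l) hχl)⟩
  rw [div_le_iff₀ (by positivity), mul_left_comm, mul_min_of_nonneg _ _ hl0.le]
  linarith [lt_min hlr hls]
theorem hasSymbolBoundAt_amplitude {ω₁ ω₂ : ℝ → ℂ} {χ : ℝ → ℝ} {N : ℕ} {B r s l : ℝ}
    (hω₁ : ContDiff ℝ N ω₁) (hω₂ : ContDiff ℝ N ω₂) (hχ : ContDiff ℝ N χ)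
    (hω₁b : HasSymbolBoundAt ω₁ N 1 (-1 / 2) (l * r))
    (hω₂b : HasSymbolBoundAt ω₂ N 1 (-1 / 2) (l * s))
    (hχb : ∀ i ≤ N, ∀ t, ‖iteratedDeriv i χ t‖ ≤ B) (hr : 0 < r) (hs : 0 < s) (hl : 0 < l)
    (hl1 : l ≤ 1) :
    HasSymbolBoundAt (fun l : ℝ => ω₁ (l * r) * (ω₂ (l * s) * ((l * χ l : ℝ) : ℂ))) N
      (8 ^ N * B / √(r * s)) 0 l := by
  have hgs : ContDiff ℝ N fun x : ℝ => x * χ x := contDiff_id.mul hχ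
  have hg := ((hasSymbolBoundAt_id N hl).mul (hasSymbolBoundAt_of_forall_norm_le hχb hl hl1)
    contDiff_id hχ hl).ofReal hgs
  have h₂ := (hω₂b.comp_mul_const hω₂ hl hs).mul hg (hω₂.comp (contDiff_id.mul contDiff_const))
    (Complex.ofRealCLM.contDiff.comp hgs) hl
  have h₁ := (hω₁b.comp_mul_const hω₁ hl hr).mul h₂ (hω₁.comp (contDiff_id.mul contDiff_const))
    ((hω₂.comp (contDiff_id.mul contDiff_const)).mul (Complex.ofRealCLM.contDiff.comp hgs)) hl
  have hC : 8 ^ N * B / √(r * s) =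
      2 ^ N * (1 * r ^ (-1 / 2 : ℝ)) * (2 ^ N * (1 * s ^ (-1 / 2 : ℝ)) * (2 ^ N * 1 * B)) := by
    rw [sqrt_eq_rpow, mul_rpow hr.le hs.le, neg_div, rpow_neg hr.le, rpow_neg hs.le,
      show (8 : ℝ) = 2 * 2 * 2 by norm_num, mul_pow, mul_pow]
    ring
  rw [hC, show (0 : ℝ) = -1 / 2 + (-1 / 2 + (1 + 0)) by norm_num]
  exact h₁

theorem pow_abs_mul_norm_integral_amplitude_le {ω₁ ω₂ : ℝ → ℂ} {χ : ℝ → ℝ} {B r s : ℝ}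
    (hω₁ : ContDiff ℝ (3 : ℕ) ω₁) (hω₂ : ContDiff ℝ (3 : ℕ) ω₂) (hχ : ContDiff ℝ (3 : ℕ) χ)
    (hω₁0 : ∀ z ≤ 1 / 2, ω₁ z = 0) (hω₂0 : ∀ z ≤ 1 / 2, ω₂ z = 0) (hχ1 : ∀ t, 1 < t → χ t = 0)
    (hω₁b : ∀ z, 0 < z → HasSymbolBoundAt ω₁ 3 1 (-1 / 2) z)
    (hω₂b : ∀ z, 0 < z → HasSymbolBoundAt ω₂ 3 1 (-1 / 2) z)
    (hB : ∀ i ≤ 3, ∀ t, ‖iteratedDeriv i χ t‖ ≤ B) (hr : 1 ≤ r) (hs : 1 ≤ s) {n : ℕ}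
    (hn : n ≤ 3) (t : ℝ) :
    |t| ^ n * ‖∫ l, Complex.exp (Complex.I * ↑(l * t)) *
        (ω₁ (l * r) * (ω₂ (l * s) * ((l * χ l : ℝ) : ℂ)))‖ ≤
      8 ^ 3 * B / √(r * s) * ∫ l in 1 / (2 * min r s)..1, l ^ ((0 : ℝ) - n) := by
  have hr0 : 0 < r := by linarith
  have hs0 : 0 < s := by linarith
  have ha1 : 1 / (2 * min r s) ≤ 1 := by
    rw [div_le_one (by positivity)]; linarith [le_min hr hs]
  have hFs : ContDiff ℝ (3 : ℕ) fun l : ℝ => ω₁ (l * r) * (ω₂ (l * s) * ((l * χ l : ℝ) : ℂ)) :=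
    (hω₁.comp (contDiff_id.mul contDiff_const)).mul ((hω₂.comp (contDiff_id.mul contDiff_const)).mul
      (Complex.ofRealCLM.contDiff.comp (contDiff_id.mul hχ)))
  refine pow_abs_mul_norm_integral_le_of_hasSymbolBoundAt hn (by positivity) ha1 hFs
    (support_amplitude_subset hr0 hs0 hω₁0 hω₂0 hχ1) (fun l hl => ?_) t
  have hl0 : 0 < l := lt_of_lt_of_le (by positivity) hl.1
  exact hasSymbolBoundAt_amplitude hω₁ hω₂ hχ (hω₁b _ (by positivity)) (hω₂b _ (by positivity)) hB
    hr0 hs0 hl0 hl.2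

theorem norm_integral_amplitude_le {ω₁ ω₂ : ℝ → ℂ} {χ : ℝ → ℝ} {B r s : ℝ}
    (hω₁ : ContDiff ℝ (3 : ℕ) ω₁) (hω₂ : ContDiff ℝ (3 : ℕ) ω₂) (hχ : ContDiff ℝ (3 : ℕ) χ)
    (hω₁0 : ∀ z ≤ 1 / 2, ω₁ z = 0) (hω₂0 : ∀ z ≤ 1 / 2, ω₂ z = 0) (hχ1 : ∀ t, 1 < t → χ t = 0)
    (hω₁b : ∀ z, 0 < z → HasSymbolBoundAt ω₁ 3 1 (-1 / 2) z)
    (hω₂b : ∀ z, 0 < z → HasSymbolBoundAt ω₂ 3 1 (-1 / 2) z)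
    (hB : ∀ i ≤ 3, ∀ t, ‖iteratedDeriv i χ t‖ ≤ B) (hr : 1 ≤ r) (hs : 1 ≤ s) :
    ‖∫ l, Complex.exp (Complex.I * ↑(l * (r - s))) *
        (ω₁ (l * r) * (ω₂ (l * s) * ((l * χ l : ℝ) : ℂ)))‖ ≤
      48 * (8 ^ 3 * B) * s * (1 + log r) / (r * √(1 + (r + s) ^ 2) * √(1 + (r - s) ^ 2)) := by
  have hosc (n : ℕ) (hn : n ≤ 3) := pow_abs_mul_norm_integral_amplitude_le hω₁ hω₂ hχ hω₁0 hω₂0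
    hχ1 hω₁b hω₂b hB hr hs hn (r - s)
  set a := 1 / (2 * min r s)
  have ha : 0 < a := by have := le_min hr hs; positivity
  have hK : 0 ≤ 8 ^ 3 * B / √(r * s) :=
    div_nonneg (mul_nonneg (by norm_num) ((norm_nonneg _).trans (hB 0 (by norm_num) 0)))
      (sqrt_nonneg _)
  apply le_div_of_decay_bounds hr hs (by linarith [log_nonneg hr]) (norm_nonneg _)
  · have hJ : ∫ l in a..1, l ^ ((0 : ℝ) - (0 : ℕ)) ≤ 1 := by
      simp only [CharP.cast_eq_zero, sub_zero, rpow_zero, intervalIntegral.integral_const,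
        smul_eq_mul, mul_one]
      linarith
    simpa using (hosc 0 (by norm_num)).trans (mul_le_of_le_one_right hK hJ)
  · have hJ : ∫ l in a..1, l ^ ((0 : ℝ) - (1 : ℕ)) ≤ 1 + log r := by
      rw [Nat.cast_one, zero_sub, intervalIntegral_rpow_neg_one ha, one_div_one_div,
        log_mul two_ne_zero (by linarith [le_min hr hs])]
      linarith [log_two_lt_d9, log_le_log (by linarith [le_min hr hs]) (min_le_left r s)]
    simpa using (hosc 1 (by norm_num)).trans (mul_le_mul_of_nonneg_left hJ hK)
  · have hJ : ∫ l in a..1, l ^ ((0 : ℝ) - (3 : ℕ)) ≤ 2 * s ^ 2 := by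
      rw [show (0 : ℝ) - (3 : ℕ) = -3 by norm_num]
      refine (intervalIntegral_rpow_neg_three_le ha).trans ?_
      rw [rpow_neg ha.le, rpow_two]
      simp only [a, one_div, inv_pow, inv_inv]
      nlinarith [min_le_right r s, le_min hr hs]
    simpa using (hosc 3 le_rfl).trans (mul_le_mul_of_nonneg_left hJ hK)

theorem stmt_17_general (lam₁ : ℝ) (hlam₁ : lam₁ ∈ Set.Ioc (0:ℝ) (1/2))
    (χ : ℝ → ℝ) (hχ : ContDiff ℝ (⊤ : ℕ∞) χ)
    (hχsupp : ∀ t : ℝ, t ∉ Set.Icc (0:ℝ) (2 * lam₁) → χ t = 0)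
    (hχbdd : ∀ n : ℕ, ∃ B : ℝ, ∀ t : ℝ, |iteratedDeriv n χ t| ≤ B)
    (ω₁ ω₂ : ℝ → ℂ)
    (hω₁ : ContDiffOn ℝ (⊤ : ℕ∞) ω₁ (Set.Ioi 0))
    (hω₂ : ContDiffOn ℝ (⊤ : ℕ∞) ω₂ (Set.Ioi 0))
    (hω₁0 : ∀ z : ℝ, z ≤ 1/2 → ω₁ z = 0) (hω₂0 : ∀ z : ℝ, z ≤ 1/2 → ω₂ z = 0)
    (hω₁b : ∀ z : ℝ, 0 < z → ∀ j : ℕ, j ≤ 3 →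
      ‖iteratedDeriv j ω₁ z‖ ≤ z ^ (-(1:ℝ)/2 - j))
    (hω₂b : ∀ z : ℝ, 0 < z → ∀ j : ℕ, j ≤ 3 →
      ‖iteratedDeriv j ω₂ z‖ ≤ z ^ (-(1:ℝ)/2 - j)) :
    ∃ C : ℝ, 0 < C ∧ ∀ r s : ℝ, 1 ≤ r → 1 ≤ s →
      ‖∫ l in Set.Ioi (0:ℝ),
          Complex.exp (Complex.I * (l * (r - s) : ℝ)) * ω₁ (l * r) * ω₂ (l * s) *
            (l : ℂ) * (χ l : ℂ)‖ ≤
        C * s * (1 + Real.log r) /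
          (r * Real.sqrt (1 + (r + s) ^ 2) * Real.sqrt (1 + (r - s) ^ 2)) := by
  obtain ⟨B, hB⟩ := exists_forall_le_forall_abs_le hχbdd 3
  have h3 : ((3 : ℕ) : WithTop ℕ∞) ≤ ((⊤ : ℕ∞) : WithTop ℕ∞) := WithTop.coe_le_coe.mpr le_top
  refine ⟨48 * (8 ^ 3 * max B 1), by positivity, fun r s hr hs => ?_⟩
  have hIoi : ∫ l in Set.Ioi (0:ℝ), Complex.exp (Complex.I * (l * (r - s) : ℝ)) * ω₁ (l * r) *
        ω₂ (l * s) * (l : ℂ) * (χ l : ℂ) =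
      ∫ l, Complex.exp (Complex.I * ↑(l * (r - s))) *
        (ω₁ (l * r) * (ω₂ (l * s) * ((l * χ l : ℝ) : ℂ))) := by
    rw [setIntegral_eq_integral_of_forall_compl_eq_zero fun l hl => by
      rw [hω₁0 _ (by nlinarith [not_lt.mp (show ¬ 0 < l from hl)])]; simp]
    congr 1 with l
    push_cast; ring
  rw [hIoi]
  exact norm_integral_amplitude_le
    ((contDiff_of_contDiffOn_Ioi_of_eq_zero one_half_pos hω₁ hω₁0).of_le h3)
    ((contDiff_of_contDiffOn_Ioi_of_eq_zero one_half_pos hω₂ hω₂0).of_le h3) (hχ.of_le h3)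
    hω₁0 hω₂0 (fun t ht => hχsupp t fun h => by linarith [h.2, hlam₁.2])
    (fun z hz i hi => by simpa using hω₁b z hz i hi)
    (fun z hz i hi => by simpa using hω₂b z hz i hi)
    (fun i hi t => (hB i hi t).trans (le_max_left _ _)) hr hs

/-- the oscillatory integral bound
`|∫₀^∞ e^{iλ(r-s)} ω₁(λr) ω₂(λs) λ χ(λ) dλ| ≤ C s (1 + log r) / (r ⟨r+s⟩ ⟨r-s⟩)` for
`r, s ≥ 1`, where the `ωᵢ` are smooth on `(0,∞)`, vanish on `(0, 1/2]`, and satisfy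
`|ωᵢ^{(j)}(z)| ≤ z^{-1/2-j}` for `j = 0,1,2,3`. -/
theorem stmt_17 (lam₁ : ℝ) (hlam₁ : lam₁ ∈ Set.Ioc (0:ℝ) (1/2))
    (χ : ℝ → ℝ) (hχ : ContDiff ℝ (⊤ : ℕ∞) χ)
    (hχ01 : ∀ t, χ t ∈ Set.Icc (0:ℝ) 1)
    (hχsupp : ∀ t : ℝ, t ∉ Set.Icc (0:ℝ) (2 * lam₁) → χ t = 0)
    (hχbdd : ∀ n : ℕ, ∃ B : ℝ, ∀ t : ℝ, |iteratedDeriv n χ t| ≤ B)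
    (ω₁ ω₂ : ℝ → ℂ)
    (hω₁ : ContDiffOn ℝ (⊤ : ℕ∞) ω₁ (Set.Ioi 0))
    (hω₂ : ContDiffOn ℝ (⊤ : ℕ∞) ω₂ (Set.Ioi 0))
    (hω₁0 : ∀ z : ℝ, z ≤ 1/2 → ω₁ z = 0) (hω₂0 : ∀ z : ℝ, z ≤ 1/2 → ω₂ z = 0)
    (hω₁b : ∀ z : ℝ, 0 < z → ∀ j : ℕ, j ≤ 3 →
      ‖iteratedDeriv j ω₁ z‖ ≤ z ^ (-(1:ℝ)/2 - j))
    (hω₂b : ∀ z : ℝ, 0 < z → ∀ j : ℕ, j ≤ 3 →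
      ‖iteratedDeriv j ω₂ z‖ ≤ z ^ (-(1:ℝ)/2 - j)) :
    ∃ C : ℝ, 0 < C ∧ ∀ r s : ℝ, 1 ≤ r → 1 ≤ s →
      ‖∫ l in Set.Ioi (0:ℝ),
          Complex.exp (Complex.I * (l * (r - s) : ℝ)) * ω₁ (l * r) * ω₂ (l * s) *
            (l : ℂ) * (χ l : ℂ)‖ ≤
        C * s * (1 + Real.log r) /
          (r * Real.sqrt (1 + (r + s) ^ 2) * Real.sqrt (1 + (r - s) ^ 2)) :=
  stmt_17_general lam₁ hlam₁ χ hχ hχsupp hχbdd ω₁ ω₂ hω₁ hω₂ hω₁0 hω₂0 hω₁b hω₂b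
end

section
/- For every ε ∈ (0, 1), δ > 0, and δ′ ∈ (0, 1), there is a constant C = C(ε, δ, δ′) such that for all b ≥ 0: ∫₀^∞ (1 + log⟨r⟩) · ⟨r⟩^{−ε} · r^{ε−1} · ⟨r − b⟩^{−1−δ} dr ≤ C ⟨b⟩^{δ′ − 1}. -/
open MeasureTheory Real

private lemma jap_one_le (x : ℝ) : 1 ≤ Real.sqrt (1 + x ^ 2) :=
  (Real.le_sqrt zero_le_one (by positivity)).mpr (by nlinarith)

private lemma jap_pos (x : ℝ) : 0 < Real.sqrt (1 + x ^ 2) :=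
  lt_of_lt_of_le one_pos (jap_one_le x)

private lemma self_le_jap {x : ℝ} (hx : 0 ≤ x) : x ≤ Real.sqrt (1 + x ^ 2) :=
  (Real.le_sqrt hx (by positivity)).mpr (by nlinarith)

private lemma abs_le_jap (x : ℝ) : |x| ≤ Real.sqrt (1 + x ^ 2) :=
  (Real.le_sqrt (abs_nonneg x) (by positivity)).mpr (by nlinarith [sq_abs x])

private lemma jap_add (x y : ℝ) :
    Real.sqrt (1 + (x + y) ^ 2) ≤ Real.sqrt (1 + x ^ 2) + Real.sqrt (1 + y ^ 2) := by
  have hx := abs_le_jap x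
  have hy := abs_le_jap y
  have hx0 : (0:ℝ) ≤ Real.sqrt (1 + x ^ 2) := (jap_pos x).le
  have hy0 : (0:ℝ) ≤ Real.sqrt (1 + y ^ 2) := (jap_pos y).le
  have hx2 : Real.sqrt (1 + x ^ 2) ^ 2 = 1 + x ^ 2 := Real.sq_sqrt (by positivity)
  have hy2 : Real.sqrt (1 + y ^ 2) ^ 2 = 1 + y ^ 2 := Real.sq_sqrt (by positivity)
  have hxy : |x| * |y| ≤ Real.sqrt (1 + x ^ 2) * Real.sqrt (1 + y ^ 2) :=
    mul_le_mul hx hy (abs_nonneg y) hx0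
  have key : 1 + (x + y) ^ 2 ≤ (Real.sqrt (1 + x ^ 2) + Real.sqrt (1 + y ^ 2)) ^ 2 := by
    nlinarith [le_abs_self (x * y), abs_mul x y]
  calc Real.sqrt (1 + (x + y) ^ 2)
      ≤ Real.sqrt ((Real.sqrt (1 + x ^ 2) + Real.sqrt (1 + y ^ 2)) ^ 2) :=
        Real.sqrt_le_sqrt key
    _ = _ := Real.sqrt_sq (by positivity)

private lemma one_add_log_le {θ A : ℝ} (hθ : 0 < θ) (hA : 1 ≤ A) :
    1 + Real.log A ≤ (1 + 1 / θ) * A ^ θ := by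
  have hA0 : 0 < A := lt_of_lt_of_le one_pos hA
  have h1 : Real.log A ≤ A ^ θ / θ := by
    have h := Real.log_le_sub_one_of_pos (Real.rpow_pos_of_pos hA0 θ)
    rw [Real.log_rpow hA0] at h
    rw [le_div_iff₀ hθ]
    nlinarith
  have h2 : (1:ℝ) ≤ A ^ θ := Real.one_le_rpow hA hθ.le
  have h3 : (1 + 1 / θ) * A ^ θ = A ^ θ + A ^ θ / θ := by field_simp
  linarith

private lemma helper_rpow {c u v z : ℝ} (hc : 1 ≤ c) (hu : 0 < u) (hv : 0 < v)
    (h : u ≤ c * v) (hz0 : z ≤ 0) (hz1 : -1 ≤ z) : v ^ z ≤ c * u ^ z := by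
  have hc0 : 0 < c := lt_of_lt_of_le one_pos hc
  have h1 : (c * v) ^ z ≤ u ^ z := Real.rpow_le_rpow_of_nonpos hu h hz0
  have h2 : (c * v) ^ z = c ^ z * v ^ z := Real.mul_rpow hc0.le hv.le
  have h3 : c ^ (-z) ≤ c := by
    calc c ^ (-z) ≤ c ^ (1:ℝ) := Real.rpow_le_rpow_of_exponent_le hc (by linarith)
      _ = c := Real.rpow_one c
  have h4 : v ^ z = c ^ (-z) * (c ^ z * v ^ z) := by
    rw [← mul_assoc, ← Real.rpow_add hc0]; simp
  rw [h4]
  calc c ^ (-z) * (c ^ z * v ^ z) = c ^ (-z) * (c * v) ^ z := by rw [h2]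
    _ ≤ c ^ (-z) * u ^ z :=
        mul_le_mul_of_nonneg_left h1 (Real.rpow_nonneg hc0.le _)
    _ ≤ c * u ^ z := mul_le_mul_of_nonneg_right h3 (Real.rpow_nonneg hu.le _)


private lemma ptwise_core {ε δ δ' θ δ'' c K A B D r : ℝ}
    (hε0 : 0 < ε) (hε1 : ε < 1) (hδ : 0 < δ) (hδ'0 : 0 < δ') (hδ'1 : δ' < 1)
    (hr : 0 < r) (hA1 : 1 ≤ A) (hB1 : 1 ≤ B) (hD1 : 1 ≤ D)
    (hrA : r ≤ A) (hDAB : D ≤ A + B)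
    (hA2 : r ≤ 1 → A ≤ 2) (hAr : 1 ≤ r → A ≤ Real.sqrt 2 * r)
    (hθ0 : 0 < θ) (hθδ' : θ ≤ δ') (hδ''def : δ'' = δ + δ' - θ)
    (hc1 : 1 ≤ c) (hlog : 1 + Real.log A ≤ c * A ^ θ)
    (h6 : 6 * c * 2 ^ δ'' ≤ K) (h22 : 2 * Real.sqrt 2 * c ≤ K) :
    (1 + Real.log A) * A ^ (-ε) * r ^ (ε - 1) * B ^ (-1 - δ) ≤
      K * D ^ (δ' - 1) * (r ^ (ε - 1) * A ^ (-ε - δ'') + B ^ (-1 - δ)) := by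
  have hδ''0 : 0 < δ'' := by rw [hδ''def]; linarith
  have hc0 : 0 < c := lt_of_lt_of_le one_pos hc1
  have h2d : (0:ℝ) < 2 ^ δ'' := Real.rpow_pos_of_pos two_pos _
  have hs2 : (1:ℝ) ≤ Real.sqrt 2 := (Real.le_sqrt zero_le_one (by norm_num)).mpr (by norm_num)
  have hs20 : (0:ℝ) < Real.sqrt 2 := lt_of_lt_of_le one_pos hs2
  have hA0 : 0 < A := lt_of_lt_of_le one_pos hA1
  have hB0 : 0 < B := lt_of_lt_of_le one_pos hB1
  have hD0 : 0 < D := lt_of_lt_of_le one_pos hD1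
  have hlogA : 0 ≤ Real.log A := Real.log_nonneg hA1
  have ht1 : 0 ≤ r ^ (ε - 1) * A ^ (-ε - δ'') :=
    mul_nonneg (Real.rpow_nonneg hr.le _) (Real.rpow_nonneg hA0.le _)
  have ht2 : 0 ≤ B ^ (-1 - δ) := Real.rpow_nonneg hB0.le _
  have hDp : 0 ≤ D ^ (δ' - 1) := Real.rpow_nonneg hD0.le _
  have hK0 : 0 < K := by nlinarith
  suffices h : (1 + Real.log A) * A ^ (-ε) * r ^ (ε - 1) * B ^ (-1 - δ) ≤
      K * D ^ (δ' - 1) * (r ^ (ε - 1) * A ^ (-ε - δ'')) ∨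
      (1 + Real.log A) * A ^ (-ε) * r ^ (ε - 1) * B ^ (-1 - δ) ≤
      K * D ^ (δ' - 1) * (B ^ (-1 - δ)) by
    have expand : K * D ^ (δ' - 1) * (r ^ (ε - 1) * A ^ (-ε - δ'') + B ^ (-1 - δ)) =
        K * D ^ (δ' - 1) * (r ^ (ε - 1) * A ^ (-ε - δ'')) +
        K * D ^ (δ' - 1) * (B ^ (-1 - δ)) := by ring
    rcases h with h | h
    · rw [expand]
      nlinarith [mul_nonneg (mul_nonneg hK0.le hDp) ht2]
    · rw [expand]
      nlinarith [mul_nonneg (mul_nonneg hK0.le hDp) ht1]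
  rcases le_total r 1 with hr1 | hr1
  · -- case r ≤ 1 : use term 1
    left
    have hA2' : A ≤ 2 := hA2 hr1
    have b1 : 1 + Real.log A ≤ 2 * c := by
      have := Real.log_le_sub_one_of_pos hA0
      nlinarith
    have b2 : A ^ (-ε) ≤ 2 ^ δ'' * A ^ (-ε - δ'') := by
      have e : A ^ (-ε) = A ^ δ'' * A ^ (-ε - δ'') := by
        rw [← Real.rpow_add hA0]; congr 1; ring
      have h2 : A ^ δ'' ≤ 2 ^ δ'' := Real.rpow_le_rpow hA0.le hA2' hδ''0.le
      rw [e]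
      exact mul_le_mul_of_nonneg_right h2 (Real.rpow_nonneg hA0.le _)
    have b3 : B ^ (-1 - δ) ≤ 3 * D ^ (δ' - 1) := by
      have hD3B : D ≤ 3 * B := by linarith
      have step1 : B ^ (-1 - δ) ≤ B ^ (δ' - 1) :=
        Real.rpow_le_rpow_of_exponent_le hB1 (by linarith)
      have step2 : B ^ (δ' - 1) ≤ 3 * D ^ (δ' - 1) :=
        helper_rpow (by norm_num) hD0 hB0 hD3B (by linarith) (by linarith)
      linarith
    have key : (1 + Real.log A) * A ^ (-ε) * B ^ (-1 - δ) ≤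
        (2 * c) * (2 ^ δ'' * A ^ (-ε - δ'')) * (3 * D ^ (δ' - 1)) := by
      have m1 : (1 + Real.log A) * A ^ (-ε) ≤ (2 * c) * (2 ^ δ'' * A ^ (-ε - δ'')) :=
        mul_le_mul b1 b2 (Real.rpow_nonneg hA0.le _) (mul_nonneg (by norm_num) hc0.le)
      exact mul_le_mul m1 b3 (Real.rpow_nonneg hB0.le _)
        (mul_nonneg (mul_nonneg (by norm_num) hc0.le)
          (mul_nonneg h2d.le (Real.rpow_nonneg hA0.le _)))
    calc (1 + Real.log A) * A ^ (-ε) * r ^ (ε - 1) * B ^ (-1 - δ)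
        = ((1 + Real.log A) * A ^ (-ε) * B ^ (-1 - δ)) * r ^ (ε - 1) := by ring
      _ ≤ ((2 * c) * (2 ^ δ'' * A ^ (-ε - δ'')) * (3 * D ^ (δ' - 1))) * r ^ (ε - 1) :=
          mul_le_mul_of_nonneg_right key (Real.rpow_nonneg hr.le _)
      _ = (6 * c * 2 ^ δ'') * (D ^ (δ' - 1) * (r ^ (ε - 1) * A ^ (-ε - δ''))) := by ring
      _ ≤ K * (D ^ (δ' - 1) * (r ^ (ε - 1) * A ^ (-ε - δ''))) :=
          mul_le_mul_of_nonneg_right h6 (mul_nonneg hDp ht1)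
      _ = K * D ^ (δ' - 1) * (r ^ (ε - 1) * A ^ (-ε - δ'')) := by ring
  · -- case 1 ≤ r
    have hAr' : A ≤ Real.sqrt 2 * r := hAr hr1
    have hF : (1 + Real.log A) * A ^ (-ε) * r ^ (ε - 1) ≤
        (Real.sqrt 2 * c) * A ^ (θ - 1) := by
      have c2 : r ^ (ε - 1) ≤ Real.sqrt 2 * A ^ (ε - 1) :=
        helper_rpow hs2 hA0 hr hAr' (by linarith) (by linarith)
      have m1 : (1 + Real.log A) * A ^ (-ε) ≤ (c * A ^ θ) * A ^ (-ε) :=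
        mul_le_mul_of_nonneg_right hlog (Real.rpow_nonneg hA0.le _)
      have m2 : (1 + Real.log A) * A ^ (-ε) * r ^ (ε - 1) ≤
          ((c * A ^ θ) * A ^ (-ε)) * (Real.sqrt 2 * A ^ (ε - 1)) :=
        mul_le_mul m1 c2 (Real.rpow_nonneg hr.le _)
          (mul_nonneg (mul_nonneg hc0.le (Real.rpow_nonneg hA0.le _))
            (Real.rpow_nonneg hA0.le _))
      have e : ((c * A ^ θ) * A ^ (-ε)) * (Real.sqrt 2 * A ^ (ε - 1)) =
          (Real.sqrt 2 * c) * (A ^ θ * A ^ (-ε) * A ^ (ε - 1)) := by ring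
      have e2 : A ^ θ * A ^ (-ε) * A ^ (ε - 1) = A ^ (θ - 1) := by
        rw [← Real.rpow_add hA0, ← Real.rpow_add hA0]; congr 1; ring
      calc (1 + Real.log A) * A ^ (-ε) * r ^ (ε - 1)
          ≤ ((c * A ^ θ) * A ^ (-ε)) * (Real.sqrt 2 * A ^ (ε - 1)) := m2
        _ = (Real.sqrt 2 * c) * A ^ (θ - 1) := by rw [e, e2]
    rcases le_total B A with hBA | hAB
    · -- B ≤ A : use term 2
      right
      have hD2A : D ≤ 2 * A := by linarith
      have s1 : A ^ (θ - 1) ≤ A ^ (δ' - 1) :=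
        Real.rpow_le_rpow_of_exponent_le hA1 (by linarith)
      have s2 : A ^ (δ' - 1) ≤ 2 * D ^ (δ' - 1) :=
        helper_rpow one_le_two hD0 hA0 hD2A (by linarith) (by linarith)
      have hF2 : (1 + Real.log A) * A ^ (-ε) * r ^ (ε - 1) ≤
          (Real.sqrt 2 * c) * (2 * D ^ (δ' - 1)) := by
        calc (1 + Real.log A) * A ^ (-ε) * r ^ (ε - 1)
            ≤ (Real.sqrt 2 * c) * A ^ (θ - 1) := hF
          _ ≤ (Real.sqrt 2 * c) * A ^ (δ' - 1) :=
              mul_le_mul_of_nonneg_left s1 (mul_nonneg hs20.le hc0.le)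
          _ ≤ (Real.sqrt 2 * c) * (2 * D ^ (δ' - 1)) :=
              mul_le_mul_of_nonneg_left s2 (mul_nonneg hs20.le hc0.le)
      calc (1 + Real.log A) * A ^ (-ε) * r ^ (ε - 1) * B ^ (-1 - δ)
          ≤ ((Real.sqrt 2 * c) * (2 * D ^ (δ' - 1))) * B ^ (-1 - δ) :=
            mul_le_mul_of_nonneg_right hF2 ht2
        _ = (2 * Real.sqrt 2 * c) * (D ^ (δ' - 1) * B ^ (-1 - δ)) := by ring
        _ ≤ K * (D ^ (δ' - 1) * B ^ (-1 - δ)) :=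
            mul_le_mul_of_nonneg_right h22 (mul_nonneg hDp ht2)
        _ = K * D ^ (δ' - 1) * B ^ (-1 - δ) := by ring
    · -- A ≤ B : use term 1
      left
      have hD2B : D ≤ 2 * B := by linarith
      have s1 : B ^ (-1 - δ) = B ^ (δ' - 1) * B ^ (-δ - δ') := by
        rw [← Real.rpow_add hB0]; congr 1; ring
      have s2 : B ^ (δ' - 1) ≤ 2 * D ^ (δ' - 1) :=
        helper_rpow one_le_two hD0 hB0 hD2B (by linarith) (by linarith)
      have s3 : B ^ (-δ - δ') ≤ A ^ (-δ - δ') :=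
        Real.rpow_le_rpow_of_nonpos hA0 hAB (by linarith)
      have s4 : A ^ (θ - 1) * A ^ (-δ - δ') = A ^ (ε - 1) * A ^ (-ε - δ'') := by
        rw [← Real.rpow_add hA0, ← Real.rpow_add hA0]
        congr 1
        rw [hδ''def]; ring
      have s5 : A ^ (ε - 1) ≤ r ^ (ε - 1) :=
        Real.rpow_le_rpow_of_nonpos hr hrA (by linarith)
      have hBB : B ^ (-1 - δ) ≤ (2 * D ^ (δ' - 1)) * A ^ (-δ - δ') := by
        rw [s1]
        exact mul_le_mul s2 s3 (Real.rpow_nonneg hB0.le _)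
          (mul_nonneg (by norm_num) hDp)
      calc (1 + Real.log A) * A ^ (-ε) * r ^ (ε - 1) * B ^ (-1 - δ)
          ≤ ((Real.sqrt 2 * c) * A ^ (θ - 1)) * ((2 * D ^ (δ' - 1)) * A ^ (-δ - δ')) :=
            mul_le_mul hF hBB (Real.rpow_nonneg hB0.le _)
              (mul_nonneg (mul_nonneg hs20.le hc0.le) (Real.rpow_nonneg hA0.le _))
        _ = (2 * Real.sqrt 2 * c) * D ^ (δ' - 1) * (A ^ (θ - 1) * A ^ (-δ - δ')) := by ring
        _ = (2 * Real.sqrt 2 * c) * D ^ (δ' - 1) * (A ^ (ε - 1) * A ^ (-ε - δ'')) := by rw [s4]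
        _ ≤ (2 * Real.sqrt 2 * c) * D ^ (δ' - 1) * (r ^ (ε - 1) * A ^ (-ε - δ'')) :=
            mul_le_mul_of_nonneg_left
              (mul_le_mul_of_nonneg_right s5 (Real.rpow_nonneg hA0.le _))
              (mul_nonneg (mul_nonneg (mul_nonneg (by norm_num) hs20.le) hc0.le) hDp)
        _ = (2 * Real.sqrt 2 * c) * (D ^ (δ' - 1) * (r ^ (ε - 1) * A ^ (-ε - δ''))) := by ring
        _ ≤ K * (D ^ (δ' - 1) * (r ^ (ε - 1) * A ^ (-ε - δ''))) :=
            mul_le_mul_of_nonneg_right h22 (mul_nonneg hDp ht1)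
        _ = K * D ^ (δ' - 1) * (r ^ (ε - 1) * A ^ (-ε - δ'')) := by ring

private lemma ptwise {ε δ δ' b r : ℝ} (hε0 : 0 < ε) (hε1 : ε < 1) (hδ : 0 < δ)
    (hδ'0 : 0 < δ') (hδ'1 : δ' < 1) (hb : 0 ≤ b) (hr : 0 < r) :
    (1 + Real.log (Real.sqrt (1 + r ^ 2))) * Real.sqrt (1 + r ^ 2) ^ (-ε) *
        r ^ (ε - 1) * Real.sqrt (1 + (r - b) ^ 2) ^ (-1 - δ) ≤
      (12 * (1 + 2 / δ') * 2 ^ (δ + δ' / 2) + 4 * Real.sqrt 2 * (1 + 2 / δ')) *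
        Real.sqrt (1 + b ^ 2) ^ (δ' - 1) *
        (r ^ (ε - 1) * Real.sqrt (1 + r ^ 2) ^ (-ε - (δ + δ' / 2)) +
          Real.sqrt (1 + (r - b) ^ 2) ^ (-1 - δ)) := by
  have hc1 : (1:ℝ) ≤ 1 + 2 / δ' := by
    have : 0 < 2 / δ' := by positivity
    linarith
  have hc0 : (0:ℝ) < 1 + 2 / δ' := lt_of_lt_of_le one_pos hc1
  have h2d : (0:ℝ) < 2 ^ (δ + δ' / 2) := Real.rpow_pos_of_pos two_pos _
  have hs2 : (1:ℝ) ≤ Real.sqrt 2 := (Real.le_sqrt zero_le_one (by norm_num)).mpr (by norm_num)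
  have hs20 : (0:ℝ) < Real.sqrt 2 := lt_of_lt_of_le one_pos hs2
  have hDAB : Real.sqrt (1 + b ^ 2) ≤ Real.sqrt (1 + r ^ 2) + Real.sqrt (1 + (r - b) ^ 2) := by
    have h := jap_add r (b - r)
    have e1 : r + (b - r) = b := by ring
    have e2 : (b - r) ^ 2 = (r - b) ^ 2 := by ring
    rw [e1, e2] at h
    exact h
  have hA2 : r ≤ 1 → Real.sqrt (1 + r ^ 2) ≤ 2 := by
    intro hr1
    have h1 : Real.sqrt (1 + r ^ 2) ≤ Real.sqrt 2 := Real.sqrt_le_sqrt (by nlinarith)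
    have h2 : Real.sqrt 2 ≤ 2 := by
      nlinarith [Real.sq_sqrt (by norm_num : (0:ℝ) ≤ 2), Real.sqrt_nonneg 2]
    linarith
  have hAr : 1 ≤ r → Real.sqrt (1 + r ^ 2) ≤ Real.sqrt 2 * r := by
    intro hr1
    have h1 : Real.sqrt (1 + r ^ 2) ≤ Real.sqrt (2 * r ^ 2) := Real.sqrt_le_sqrt (by nlinarith)
    have h2 : Real.sqrt (2 * r ^ 2) = Real.sqrt 2 * r := by
      rw [Real.sqrt_mul (by norm_num), Real.sqrt_sq hr.le]
    linarith [h1, h2.le]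
  have hlog : 1 + Real.log (Real.sqrt (1 + r ^ 2)) ≤
      (1 + 2 / δ') * Real.sqrt (1 + r ^ 2) ^ (δ' / 2) := by
    have h := one_add_log_le (θ := δ' / 2) (by linarith) (jap_one_le r)
    have e : (1:ℝ) + 1 / (δ' / 2) = 1 + 2 / δ' := by
      rw [one_div_div]
    rw [e] at h
    exact h
  exact ptwise_core hε0 hε1 hδ hδ'0 hδ'1 hr (jap_one_le r) (jap_one_le (r - b))
    (jap_one_le b) (self_le_jap hr.le) hDAB hA2 hAr (by linarith : (0:ℝ) < δ' / 2)
    (by linarith) (by ring) hc1 hlog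
    (by nlinarith : 6 * (1 + 2 / δ') * 2 ^ (δ + δ' / 2) ≤
      12 * (1 + 2 / δ') * 2 ^ (δ + δ' / 2) + 4 * Real.sqrt 2 * (1 + 2 / δ'))
    (by nlinarith : 2 * Real.sqrt 2 * (1 + 2 / δ') ≤
      12 * (1 + 2 / δ') * 2 ^ (δ + δ' / 2) + 4 * Real.sqrt 2 * (1 + 2 / δ'))

/-- for `ε ∈ (0,1)`, `δ > 0`, `δ' ∈ (0,1)`,
`∫₀^∞ (1 + log⟨r⟩) ⟨r⟩^{-ε} r^{ε-1} ⟨r-b⟩^{-1-δ} dr ≤ C ⟨b⟩^{δ'-1}` uniformly in `b ≥ 0`. -/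
theorem stmt_18 (ε δ δ' : ℝ) (hε : ε ∈ Set.Ioo (0:ℝ) 1) (hδ : 0 < δ)
    (hδ' : δ' ∈ Set.Ioo (0:ℝ) 1) :
    ∃ C : ℝ, 0 < C ∧ ∀ b : ℝ, 0 ≤ b →
      (∫ r in Set.Ioi (0:ℝ),
          (1 + Real.log (Real.sqrt (1 + r ^ 2))) * Real.sqrt (1 + r ^ 2) ^ (-ε) *
            r ^ (ε - 1) * Real.sqrt (1 + (r - b) ^ 2) ^ (-1 - δ))
        ≤ C * Real.sqrt (1 + b ^ 2) ^ (δ' - 1) := by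
  obtain ⟨hε0, hε1⟩ := hε
  obtain ⟨hδ'0, hδ'1⟩ := hδ'
  set K : ℝ := 12 * (1 + 2 / δ') * 2 ^ (δ + δ' / 2) + 4 * Real.sqrt 2 * (1 + 2 / δ') with hKdef
  have hs2 : (1:ℝ) ≤ Real.sqrt 2 := (Real.le_sqrt zero_le_one (by norm_num)).mpr (by norm_num)
  have hK0 : 0 < K := by
    rw [hKdef]
    have hc0 : (0:ℝ) < 1 + 2 / δ' := by positivity
    have h2d : (0:ℝ) < 2 ^ (δ + δ' / 2) := Real.rpow_pos_of_pos two_pos _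
    nlinarith
  -- integrability of the first majorant term
  have hg1meas : Measurable fun r : ℝ =>
      r ^ (ε - 1) * Real.sqrt (1 + r ^ 2) ^ (-ε - (δ + δ' / 2)) := by
    fun_prop
  have hg1 : IntegrableOn
      (fun r : ℝ => r ^ (ε - 1) * Real.sqrt (1 + r ^ 2) ^ (-ε - (δ + δ' / 2)))
      (Set.Ioi 0) := by
    have hsplit : Set.Ioc (0:ℝ) 1 ∪ Set.Ioi 1 = Set.Ioi (0:ℝ) :=
      Set.Ioc_union_Ioi_eq_Ioi zero_le_one
    rw [← hsplit]
    apply MeasureTheory.IntegrableOn.union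
    · -- on (0,1]
      have h01 : IntegrableOn (fun r : ℝ => r ^ (ε - 1)) (Set.Ioc (0:ℝ) 1) := by
        rw [← intervalIntegrable_iff_integrableOn_Ioc_of_le zero_le_one]
        exact intervalIntegral.intervalIntegrable_rpow' (by linarith)
      apply MeasureTheory.Integrable.mono h01 hg1meas.aestronglyMeasurable.restrict
      refine (ae_restrict_iff' measurableSet_Ioc).mpr (Filter.Eventually.of_forall ?_)
      intro r hr
      have hr0 : 0 < r := hr.1
      have hJ : (1:ℝ) ≤ Real.sqrt (1 + r ^ 2) := jap_one_le r
      have h1 : Real.sqrt (1 + r ^ 2) ^ (-ε - (δ + δ' / 2)) ≤ 1 :=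
        Real.rpow_le_one_of_one_le_of_nonpos hJ (by linarith)
      have h2 : 0 ≤ Real.sqrt (1 + r ^ 2) ^ (-ε - (δ + δ' / 2)) :=
        Real.rpow_nonneg (Real.sqrt_nonneg _) _
      have h3 : 0 ≤ r ^ (ε - 1) := Real.rpow_nonneg hr0.le _
      rw [Real.norm_eq_abs, Real.norm_eq_abs, abs_of_nonneg (mul_nonneg h3 h2),
        abs_of_nonneg h3]
      nlinarith
    · -- on (1,∞)
      have h11 : IntegrableOn (fun r : ℝ => r ^ (-1 - (δ + δ' / 2))) (Set.Ioi 1) :=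
        integrableOn_Ioi_rpow_of_lt (by linarith) one_pos
      apply MeasureTheory.Integrable.mono h11 hg1meas.aestronglyMeasurable.restrict
      refine (ae_restrict_iff' measurableSet_Ioi).mpr (Filter.Eventually.of_forall ?_)
      intro r hr
      have hr1 : (1:ℝ) < r := hr
      have hr0 : 0 < r := lt_trans one_pos hr1
      have hrA : r ≤ Real.sqrt (1 + r ^ 2) := self_le_jap hr0.le
      have h1 : Real.sqrt (1 + r ^ 2) ^ (-ε - (δ + δ' / 2)) ≤ r ^ (-ε - (δ + δ' / 2)) :=
        Real.rpow_le_rpow_of_nonpos hr0 hrA (by linarith)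
      have h2 : r ^ (ε - 1) * r ^ (-ε - (δ + δ' / 2)) = r ^ (-1 - (δ + δ' / 2)) := by
        rw [← Real.rpow_add hr0]; congr 1; ring
      have h3 : 0 ≤ r ^ (ε - 1) := Real.rpow_nonneg hr0.le _
      have h4 : 0 ≤ Real.sqrt (1 + r ^ 2) ^ (-ε - (δ + δ' / 2)) :=
        Real.rpow_nonneg (Real.sqrt_nonneg _) _
      rw [Real.norm_eq_abs, Real.norm_eq_abs, abs_of_nonneg (mul_nonneg h3 h4),
        abs_of_nonneg (Real.rpow_nonneg hr0.le _)]
      calc r ^ (ε - 1) * Real.sqrt (1 + r ^ 2) ^ (-ε - (δ + δ' / 2))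
          ≤ r ^ (ε - 1) * r ^ (-ε - (δ + δ' / 2)) :=
            mul_le_mul_of_nonneg_left h1 h3
        _ = r ^ (-1 - (δ + δ' / 2)) := h2
  -- integrability of the translated bracket
  have hφ : Integrable (fun x : ℝ => Real.sqrt (1 + x ^ 2) ^ (-1 - δ)) := by
    have h0 : Integrable (fun x : ℝ => ((1:ℝ) + ‖x‖ ^ 2) ^ (-(1 + δ) / 2)) :=
      integrable_rpow_neg_one_add_norm_sq (by simp; linarith)
    have he : (fun x : ℝ => Real.sqrt (1 + x ^ 2) ^ (-1 - δ)) =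
        fun x : ℝ => ((1:ℝ) + ‖x‖ ^ 2) ^ (-(1 + δ) / 2) := by
      funext x
      rw [Real.norm_eq_abs, sq_abs, Real.sqrt_eq_rpow, ← Real.rpow_mul (by positivity)]
      congr 1
      ring
    rw [he]
    exact h0
  set M1 : ℝ := ∫ r in Set.Ioi (0:ℝ), r ^ (ε - 1) * Real.sqrt (1 + r ^ 2) ^ (-ε - (δ + δ' / 2))
    with hM1def
  set M2 : ℝ := ∫ x : ℝ, Real.sqrt (1 + x ^ 2) ^ (-1 - δ) with hM2def
  have hM1nn : 0 ≤ M1 := by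
    rw [hM1def]
    apply setIntegral_nonneg measurableSet_Ioi
    intro r hr
    exact mul_nonneg (Real.rpow_nonneg (le_of_lt hr) _)
      (Real.rpow_nonneg (Real.sqrt_nonneg _) _)
  have hM2nn : 0 ≤ M2 := by
    rw [hM2def]
    exact integral_nonneg fun x => Real.rpow_nonneg (Real.sqrt_nonneg _) _
  refine ⟨K * (M1 + M2) + 1, by nlinarith, ?_⟩
  intro b hb
  have hDpos : 0 < Real.sqrt (1 + b ^ 2) ^ (δ' - 1) :=
    Real.rpow_pos_of_pos (jap_pos b) _
  have hφb : Integrable (fun r : ℝ => Real.sqrt (1 + (r - b) ^ 2) ^ (-1 - δ)) :=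
    hφ.comp_sub_right b
  have hGint : IntegrableOn
      (fun r : ℝ => K * Real.sqrt (1 + b ^ 2) ^ (δ' - 1) *
        (r ^ (ε - 1) * Real.sqrt (1 + r ^ 2) ^ (-ε - (δ + δ' / 2)) +
          Real.sqrt (1 + (r - b) ^ 2) ^ (-1 - δ))) (Set.Ioi 0) :=
    (hg1.add hφb.integrableOn).const_mul _
  have hf0 : 0 ≤ᵐ[volume.restrict (Set.Ioi (0:ℝ))] fun r =>
      (1 + Real.log (Real.sqrt (1 + r ^ 2))) * Real.sqrt (1 + r ^ 2) ^ (-ε) *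
        r ^ (ε - 1) * Real.sqrt (1 + (r - b) ^ 2) ^ (-1 - δ) := by
    refine (ae_restrict_iff' measurableSet_Ioi).mpr (Filter.Eventually.of_forall ?_)
    intro r hr
    have h1 : 0 ≤ 1 + Real.log (Real.sqrt (1 + r ^ 2)) := by
      have := Real.log_nonneg (jap_one_le r)
      linarith
    have hr0 : (0:ℝ) < r := hr
    exact mul_nonneg (mul_nonneg (mul_nonneg h1
      (Real.rpow_nonneg (Real.sqrt_nonneg _) _)) (Real.rpow_nonneg hr0.le _))
      (Real.rpow_nonneg (Real.sqrt_nonneg _) _)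
  have hfG : (fun r => (1 + Real.log (Real.sqrt (1 + r ^ 2))) *
        Real.sqrt (1 + r ^ 2) ^ (-ε) * r ^ (ε - 1) *
        Real.sqrt (1 + (r - b) ^ 2) ^ (-1 - δ)) ≤ᵐ[volume.restrict (Set.Ioi (0:ℝ))]
      fun r => K * Real.sqrt (1 + b ^ 2) ^ (δ' - 1) *
        (r ^ (ε - 1) * Real.sqrt (1 + r ^ 2) ^ (-ε - (δ + δ' / 2)) +
          Real.sqrt (1 + (r - b) ^ 2) ^ (-1 - δ)) := by
    refine (ae_restrict_iff' measurableSet_Ioi).mpr (Filter.Eventually.of_forall ?_)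
    intro r hr
    exact ptwise hε0 hε1 hδ hδ'0 hδ'1 hb hr
  calc (∫ r in Set.Ioi (0:ℝ),
        (1 + Real.log (Real.sqrt (1 + r ^ 2))) * Real.sqrt (1 + r ^ 2) ^ (-ε) *
          r ^ (ε - 1) * Real.sqrt (1 + (r - b) ^ 2) ^ (-1 - δ))
      ≤ ∫ r in Set.Ioi (0:ℝ), K * Real.sqrt (1 + b ^ 2) ^ (δ' - 1) *
          (r ^ (ε - 1) * Real.sqrt (1 + r ^ 2) ^ (-ε - (δ + δ' / 2)) +
            Real.sqrt (1 + (r - b) ^ 2) ^ (-1 - δ)) :=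
        integral_mono_of_nonneg hf0 hGint hfG
    _ = K * Real.sqrt (1 + b ^ 2) ^ (δ' - 1) *
          ((∫ r in Set.Ioi (0:ℝ), r ^ (ε - 1) * Real.sqrt (1 + r ^ 2) ^ (-ε - (δ + δ' / 2))) +
            ∫ r in Set.Ioi (0:ℝ), Real.sqrt (1 + (r - b) ^ 2) ^ (-1 - δ)) := by
        rw [MeasureTheory.integral_const_mul, integral_add hg1 hφb.integrableOn]
    _ ≤ K * Real.sqrt (1 + b ^ 2) ^ (δ' - 1) * (M1 + M2) := by
        have h2 : (∫ r in Set.Ioi (0:ℝ), Real.sqrt (1 + (r - b) ^ 2) ^ (-1 - δ)) ≤ M2 := by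
          have hle : (∫ r in Set.Ioi (0:ℝ), Real.sqrt (1 + (r - b) ^ 2) ^ (-1 - δ)) ≤
              ∫ r : ℝ, Real.sqrt (1 + (r - b) ^ 2) ^ (-1 - δ) :=
            setIntegral_le_integral hφb
              (Filter.Eventually.of_forall fun x =>
                Real.rpow_nonneg (Real.sqrt_nonneg _) _)
          have heq : (∫ r : ℝ, Real.sqrt (1 + (r - b) ^ 2) ^ (-1 - δ)) = M2 := by
            rw [hM2def]
            exact integral_sub_right_eq_self (fun x : ℝ => Real.sqrt (1 + x ^ 2) ^ (-1 - δ)) b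
          linarith
        have hKD : 0 ≤ K * Real.sqrt (1 + b ^ 2) ^ (δ' - 1) :=
          mul_nonneg hK0.le hDpos.le
        apply mul_le_mul_of_nonneg_left _ hKD
        linarith
    _ ≤ (K * (M1 + M2) + 1) * Real.sqrt (1 + b ^ 2) ^ (δ' - 1) := by nlinarith
end
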